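/- arXiv:2603.26450 — 7 statements merged into one kernel-verified Lean document; each statement's English description precedes it below -/
import Mathlib

section
/- Let 𝒜 be a Banach algebra, H a complex Hilbert space, π : 𝒜 → B(H) a continuous algebra homomorphism into the bounded operators on H, and D a closed, densely defined linear operator on H. Assume π(a) ∈ Lip(D) for every a ∈ 𝒜, i.e. π(a) maps Dom D into Dom D and the commutator [D, π(a)] extends to a bounded operator on H. Then there exists a constant C > 0 such that ‖[D, π(a)]‖ ≤ C·‖a‖_𝒜 for all a ∈ 𝒜. -/
/-- `b : B(H)` is a bounded extension of the commutator `[D, a] = D ∘ a - a ∘ D`,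
defined on `Dom D`. -/
def IsCommutatorBound {H : Type*} [NormedAddCommGroup H] [InnerProductSpace ℂ H]
    (D : H →ₗ.[ℂ] H) (a b : H →L[ℂ] H) : Prop :=
  ∀ (ξ : D.domain) (h : a ξ.val ∈ D.domain), b ξ.val = D ⟨a ξ.val, h⟩ - a (D ξ)

/-- Membership of a bounded operator in the Lipschitz algebra `Lip(D)`:
`a` maps `Dom D` into `Dom D` and the commutator `[D, a]` extends to a bounded operator. -/
def MemLip {H : Type*} [NormedAddCommGroup H] [InnerProductSpace ℂ H]
    (D : H →ₗ.[ℂ] H) (a : H →L[ℂ] H) : Prop :=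
  (∀ ξ ∈ D.domain, a ξ ∈ D.domain) ∧ ∃ b : H →L[ℂ] H, IsCommutatorBound D a b

theorem commBound_unique {H : Type*} [NormedAddCommGroup H] [InnerProductSpace ℂ H]
    (D : H →ₗ.[ℂ] H) (hDdense : Dense (D.domain : Set H))
    (a b₁ b₂ : H →L[ℂ] H) (hmap : ∀ ξ ∈ D.domain, a ξ ∈ D.domain)
    (h₁ : IsCommutatorBound D a b₁) (h₂ : IsCommutatorBound D a b₂) : b₁ = b₂ := by
  apply DFunLike.coe_injective
  refine Continuous.ext_on hDdense b₁.continuous b₂.continuous ?_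
  intro x hx
  show b₁ x = b₂ x
  rw [h₁ ⟨x, hx⟩ (hmap x hx), h₂ ⟨x, hx⟩ (hmap x hx)]

/-- Automatic continuity of chains: if `𝒜` is a Banach algebra, `π : 𝒜 → B(H)` a continuous
algebra homomorphism and `D` a closed, densely defined operator on `H` with
`π(a) ∈ Lip(D)` for all `a`, then there is `C > 0` with `‖[D, π(a)]‖ ≤ C‖a‖` for all `a`. -/
theorem automatic_continuity_of_chains
    {𝒜 : Type*} [NonUnitalNormedRing 𝒜] [NormedSpace ℂ 𝒜] [CompleteSpace 𝒜]
    {H : Type*} [NormedAddCommGroup H] [InnerProductSpace ℂ H] [CompleteSpace H]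
    (π : 𝒜 →L[ℂ] (H →L[ℂ] H)) (hπmul : ∀ a b : 𝒜, π (a * b) = π a * π b)
    (D : H →ₗ.[ℂ] H) (hDclosed : D.IsClosed) (hDdense : Dense (D.domain : Set H))
    (hLip : ∀ a : 𝒜, MemLip D (π a)) :
    ∃ C > 0, ∀ (a : 𝒜) (b : H →L[ℂ] H),
      IsCommutatorBound D (π a) b → ‖b‖ ≤ C * ‖a‖ := by
  classical
  set T0 : 𝒜 → (H →L[ℂ] H) := fun a => (hLip a).2.choose with hT0def
  have hT0 : ∀ a, IsCommutatorBound D (π a) (T0 a) := fun a => (hLip a).2.choose_spec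
  have uniq : ∀ (a : 𝒜) (b : H →L[ℂ] H), IsCommutatorBound D (π a) b → b = T0 a := by
    intro a b hb
    exact commBound_unique D hDdense (π a) b (T0 a) (hLip a).1 hb (hT0 a)
  -- linearity
  have hadd : ∀ x y : 𝒜, T0 (x + y) = T0 x + T0 y := by
    intro x y
    refine (uniq (x + y) (T0 x + T0 y) ?_).symm
    intro ξ h
    have hx := (hLip x).1 ξ.val ξ.2
    have hy := (hLip y).1 ξ.val ξ.2
    have ex := hT0 x ξ hx
    have ey := hT0 y ξ hy
    have hsub : (⟨π (x + y) ξ.val, h⟩ : D.domain) =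
        (⟨π x ξ.val, hx⟩ : D.domain) + ⟨π y ξ.val, hy⟩ := by
      apply Subtype.ext
      simp [map_add]
    have hD : D ⟨π (x + y) ξ.val, h⟩ = D ⟨π x ξ.val, hx⟩ + D ⟨π y ξ.val, hy⟩ := by
      rw [hsub]; exact D.map_add _ _
    rw [ContinuousLinearMap.add_apply, ex, ey, hD, map_add π,
      ContinuousLinearMap.add_apply]
    abel
  have hsmul : ∀ (c : ℂ) (x : 𝒜), T0 (c • x) = c • T0 x := by
    intro c x
    refine (uniq (c • x) (c • T0 x) ?_).symm
    intro ξ h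
    have hx := (hLip x).1 ξ.val ξ.2
    have ex := hT0 x ξ hx
    have hsub : (⟨π (c • x) ξ.val, h⟩ : D.domain) =
        c • (⟨π x ξ.val, hx⟩ : D.domain) := by
      apply Subtype.ext
      simp [map_smul]
    have hD : D ⟨π (c • x) ξ.val, h⟩ = c • D ⟨π x ξ.val, hx⟩ := by
      rw [hsub]; exact D.map_smul _ _
    rw [ContinuousLinearMap.smul_apply, ex, hD, map_smul π,
      ContinuousLinearMap.smul_apply, smul_sub]
  set T : 𝒜 →ₗ[ℂ] (H →L[ℂ] H) :=
    { toFun := T0, map_add' := hadd, map_smul' := hsmul } with hTdef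
  have hcont : Continuous T := by
    apply LinearMap.continuous_of_seq_closed_graph
    intro u a b hu hTu
    refine uniq a b ?_
    intro ξ h
    -- evaluation maps
    have hπu : Filter.Tendsto (fun n => π (u n)) Filter.atTop (nhds (π a)) :=
      (π.continuous.tendsto a).comp hu
    have h1 : Filter.Tendsto (fun n => π (u n) ξ.val) Filter.atTop (nhds (π a ξ.val)) :=
      (((ContinuousLinearMap.apply ℂ H ξ.val).continuous.tendsto _).comp hπu)
    have h2 : Filter.Tendsto (fun n => T0 (u n) ξ.val + π (u n) (D ξ)) Filter.atTop
        (nhds (b ξ.val + π a (D ξ))) := by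
      refine Filter.Tendsto.add ?_ ?_
      · exact ((ContinuousLinearMap.apply ℂ H ξ.val).continuous.tendsto _).comp hTu
      · exact ((ContinuousLinearMap.apply ℂ H (D ξ)).continuous.tendsto _).comp hπu
    have hmemgraph : ∀ n, (π (u n) ξ.val, T0 (u n) ξ.val + π (u n) (D ξ)) ∈ D.graph := by
      intro n
      have hn := (hLip (u n)).1 ξ.val ξ.2
      have := hT0 (u n) ξ hn
      rw [LinearPMap.mem_graph_iff]
      exact ⟨⟨π (u n) ξ.val, hn⟩, rfl, by rw [this, sub_add_cancel]⟩
    have hlim : (π a ξ.val, b ξ.val + π a (D ξ)) ∈ D.graph := by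
      refine hDclosed.mem_of_tendsto (h1.prodMk_nhds h2) ?_
      exact Filter.Eventually.of_forall hmemgraph
    rw [LinearPMap.mem_graph_iff] at hlim
    obtain ⟨y, hy1, hy2⟩ := hlim
    have : (⟨π a ξ.val, h⟩ : D.domain) = y := Subtype.ext hy1.symm
    rw [this, hy2]
    exact (add_sub_cancel_right _ _).symm
  set Tc : 𝒜 →L[ℂ] (H →L[ℂ] H) := ⟨T, hcont⟩ with hTcdef
  refine ⟨‖Tc‖ + 1, by positivity, ?_⟩
  intro a b hb
  have : b = Tc a := uniq a b hb
  rw [this]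
  calc ‖Tc a‖ ≤ ‖Tc‖ * ‖a‖ := Tc.le_opNorm a
    _ ≤ (‖Tc‖ + 1) * ‖a‖ := by
        apply mul_le_mul_of_nonneg_right (by linarith) (norm_nonneg a)
end

section
/- Let A be a unital complex C*-algebra and δ : A → A a bounded linear map which is a derivation, i.e. δ(xy) = δ(x)·y + x·δ(y) for all x, y ∈ A. Let n ≥ 1 and let a₁, …, aₙ ∈ A be selfadjoint. For t = (t₁, …, tₙ) ∈ ℝⁿ set P(t) := ∏_{j=1}^{n} (exp(i tⱼ aⱼ) − 1), the product taken in increasing order of j. Then for all t ∈ ℝⁿ: ‖P(t)‖ + ‖δ(P(t))‖ ≤ 2^{n−1} · (max_j ‖aⱼ‖ + max_j ‖δ(aⱼ)‖) · Σ_{j=1}^{n} |tⱼ|. -/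
/-- The ordered product `(exp(i t₁ a₁) − 1) ⋯ (exp(i tₙ aₙ) − 1)`,
taken in increasing order of the index. -/
noncomputable def expProdMinusOne {A : Type*} [NormedRing A] [NormedAlgebra ℂ A]
    {n : ℕ} (a : Fin n → A) (t : Fin n → ℝ) : A :=
  (List.ofFn fun j => NormedSpace.exp ((Complex.I * (t j : ℂ)) • a j) - 1).prod

section Aux
open NormedSpace Complex

variable {A : Type*} [CStarAlgebra A]

theorem my_unitary (a : A) (ha : IsSelfAdjoint a) (s : ℝ) :
    NormedSpace.exp (s • (I • a)) ∈ unitary A := by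
  have h1 : s • (I • a) = I • ((s:ℂ) • a) := by
    rw [Complex.coe_smul, smul_comm]
  rw [h1]
  let _ : NormedAlgebra ℚ A := .restrictScalars ℚ ℂ A
  refine exp_mem_unitary_of_mem_skewAdjoint (IsSelfAdjoint.smul_mem_skewAdjoint ?_ ?_)
  · rw [skewAdjoint.mem_iff]; simp
  · rw [Complex.coe_smul]; exact IsSelfAdjoint.smul (star_trivial s) ha

theorem my_deriv (b : A) (s : ℝ) :
    HasDerivAt (fun s : ℝ => NormedSpace.exp (s • b)) (NormedSpace.exp (s • b) * b) s := by
  have := hasDerivAt_exp_smul_const (𝕂 := ℝ) b s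
  exact this

theorem my_deriv' (b : A) (s : ℝ) :
    HasDerivAt (fun s : ℝ => NormedSpace.exp (s • b)) (b * NormedSpace.exp (s • b)) s := by
  have := hasDerivAt_exp_smul_const' (𝕂 := ℝ) b s
  exact this

theorem lemA (a : A) (ha : IsSelfAdjoint a) (s : ℝ) :
    ‖NormedSpace.exp (s • (I • a)) - 1‖ ≤ |s| * ‖a‖ := by
  have hb : ‖I • a‖ = ‖a‖ := by rw [norm_smul, Complex.norm_I, one_mul]
  have key := convex_univ.norm_image_sub_le_of_norm_hasDerivWithin_le
    (f := fun s : ℝ => NormedSpace.exp (s • (I • a))) (f' := fun s : ℝ => NormedSpace.exp (s • (I • a)) * (I • a))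
    (C := ‖a‖) (fun x _ => (my_deriv (I • a) x).hasDerivWithinAt)
    (fun x _ => le_of_eq (by rw [CStarRing.norm_mem_unitary_mul _ (my_unitary a ha x), hb]))
    (Set.mem_univ (0:ℝ)) (Set.mem_univ s)
  simpa [Real.norm_eq_abs, mul_comm] using key

theorem lemB (δ : A →L[ℂ] A) (hδ : ∀ x y : A, δ (x * y) = δ x * y + x * δ y)
    (a : A) (ha : IsSelfAdjoint a) (s : ℝ) :
    ‖δ (NormedSpace.exp (s • (I • a)))‖ ≤ |s| * ‖δ a‖ := by
  set b := I • a with hbdef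
  have hδ1 : δ 1 = 0 := by
    have h : δ 1 = δ 1 + δ 1 := by simpa using hδ 1 1
    exact (left_eq_add.mp h)
  have hdb : ‖δ b‖ = ‖δ a‖ := by
    rw [hbdef, map_smul, norm_smul, Complex.norm_I, one_mul]
  set u : ℝ → A := fun s => NormedSpace.exp (s • b) with hu
  set F : ℝ → A := fun s => NormedSpace.exp (s • (-b)) * δ (u s) with hF
  have hminus : ∀ x : ℝ, NormedSpace.exp (x • (-b)) ∈ unitary A := by
    intro x
    have := my_unitary (-a) ha.neg x
    rwa [smul_neg] at this
  have h2 : ∀ x : ℝ, HasDerivAt (fun s : ℝ => NormedSpace.exp (s • (-b)))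
      (-(NormedSpace.exp (x • (-b)) * b)) x := by
    intro x
    have h := my_deriv (-b) x
    rwa [mul_neg] at h
  have h3 : ∀ x : ℝ, HasDerivAt (fun s => δ (u s)) (δ (b * u x)) x := by
    intro x
    have h := ((δ.restrictScalars ℝ).hasFDerivAt (x := NormedSpace.exp (x • b))).comp_hasDerivAt x (my_deriv' b x)
    exact h
  have hFd : ∀ x : ℝ, HasDerivAt F (NormedSpace.exp (x • (-b)) * (δ b * u x)) x := by
    intro x
    have h := (h2 x).mul (h3 x)
    have heq : -(NormedSpace.exp (x • (-b)) * b) * δ (u x) + NormedSpace.exp (x • (-b)) * δ (b * u x)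
        = NormedSpace.exp (x • (-b)) * (δ b * u x) := by
      rw [hδ b (u x)]; noncomm_ring
    rwa [heq] at h
  have hbound : ∀ x : ℝ, ‖NormedSpace.exp (x • (-b)) * (δ b * u x)‖ ≤ ‖δ a‖ := by
    intro x
    rw [CStarRing.norm_mem_unitary_mul _ (hminus x),
      CStarRing.norm_mul_mem_unitary _ (my_unitary a ha x), hdb]
  have key := convex_univ.norm_image_sub_le_of_norm_hasDerivWithin_le
    (f := F) (f' := fun x => NormedSpace.exp (x • (-b)) * (δ b * u x)) (C := ‖δ a‖)
    (fun x _ => (hFd x).hasDerivWithinAt) (fun x _ => hbound x)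
    (Set.mem_univ (0:ℝ)) (Set.mem_univ s)
  have hF0 : F 0 = 0 := by simp [hF, hu, hδ1]
  have hFs : ‖F s‖ ≤ ‖δ a‖ * |s| := by
    simpa [hF0, Real.norm_eq_abs] using key
  have hinv : u s * NormedSpace.exp (s • (-b)) = 1 := by
    rw [hu]
    let _ : NormedAlgebra ℚ A := .restrictScalars ℚ ℂ A
    rw [← exp_add_of_commute (by rw [smul_neg]; exact (Commute.refl _).neg_right)]
    simp
  have : δ (u s) = u s * F s := by
    rw [hF, ← mul_assoc, hinv, one_mul]
  rw [this, CStarRing.norm_mem_unitary_mul _ (my_unitary a ha s)]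
  rw [mul_comm] at hFs
  exact hFs

theorem derivation_one (δ : A →L[ℂ] A) (hδ : ∀ x y : A, δ (x * y) = δ x * y + x * δ y) :
    δ 1 = 0 := by
  have h : δ 1 = δ 1 + δ 1 := by simpa using hδ 1 1
  exact (left_eq_add.mp h)

theorem listnorm [Nontrivial A] :
    ∀ l : List A, (∀ x ∈ l, ‖x‖ ≤ 2) → ‖l.prod‖ ≤ 2 ^ l.length := by
  intro l
  induction l with
  | nil => intro _; simp
  | cons x xs ih =>
    intro h
    rw [List.prod_cons]
    calc ‖x * xs.prod‖ ≤ ‖x‖ * ‖xs.prod‖ := norm_mul_le _ _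
      _ ≤ 2 * 2 ^ xs.length :=
        mul_le_mul (h x (by simp)) (ih fun y hy => h y (by simp [hy]))
          (norm_nonneg _) (by norm_num)
      _ = 2 ^ (x::xs).length := by rw [List.length_cons, pow_succ]; ring

theorem listdelta [Nontrivial A] (δ : A →L[ℂ] A)
    (hδ : ∀ x y : A, δ (x * y) = δ x * y + x * δ y) :
    ∀ (xs : List A) (x : A), (∀ y ∈ x :: xs, ‖y‖ ≤ 2) →
      ‖δ ((x::xs).prod)‖ ≤ 2 ^ xs.length * ((x::xs).map fun y => ‖δ y‖).sum := by
  intro xs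
  induction xs with
  | nil => intro x h; simp
  | cons y ys ih =>
    intro x h
    have hS : (0:ℝ) ≤ ((y::ys).map fun z => ‖δ z‖).sum :=
      List.sum_nonneg (by
        intro z hz
        obtain ⟨w, _, rfl⟩ := List.mem_map.mp hz
        exact norm_nonneg _)
    have hx2 : ‖x‖ ≤ 2 := h x (by simp)
    have hprod : ‖(y::ys).prod‖ ≤ 2 ^ (y::ys).length :=
      listnorm _ (fun z hz => h z (by simp [List.mem_cons] at hz ⊢; tauto))
    have hih : ‖δ ((y::ys).prod)‖ ≤ 2 ^ ys.length * ((y::ys).map fun z => ‖δ z‖).sum :=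
      ih y (fun z hz => h z (by simp [List.mem_cons] at hz ⊢; tauto))
    rw [List.prod_cons, hδ x _]
    calc ‖δ x * (y::ys).prod + x * δ ((y::ys).prod)‖
        ≤ ‖δ x * (y::ys).prod‖ + ‖x * δ ((y::ys).prod)‖ := norm_add_le _ _
      _ ≤ ‖δ x‖ * 2 ^ (y::ys).length + 2 * (2 ^ ys.length * ((y::ys).map fun z => ‖δ z‖).sum) := by
          gcongr
          · exact le_trans (norm_mul_le _ _)
              (mul_le_mul_of_nonneg_left hprod (norm_nonneg _))
          · exact le_trans (norm_mul_le _ _)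
              (mul_le_mul hx2 hih (norm_nonneg _) (by norm_num))
      _ = 2 ^ (y::ys).length * (((x::(y::ys)).map fun z => ‖δ z‖)).sum := by
          simp only [List.map_cons, List.sum_cons, List.length_cons, pow_succ]
          ring

theorem main_thm {n : ℕ}
    (δ : A →L[ℂ] A) (hδ : ∀ x y : A, δ (x * y) = δ x * y + x * δ y)
    (hn : 1 ≤ n) (a : Fin n → A) (ha : ∀ j, IsSelfAdjoint (a j))
    (t : Fin n → ℝ) :
    ‖(List.ofFn fun j => NormedSpace.exp ((Complex.I * (t j : ℂ)) • a j) - 1).prod‖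
      + ‖δ (List.ofFn fun j => NormedSpace.exp ((Complex.I * (t j : ℂ)) • a j) - 1).prod‖
      ≤ 2 ^ (n - 1) * ((⨆ j, ‖a j‖) + ⨆ j, ‖δ (a j)‖) * ∑ j, |t j| := by
  have hc1 : (0:ℝ) ≤ ⨆ j, ‖a j‖ := Real.iSup_nonneg fun j => norm_nonneg _
  have hc2 : (0:ℝ) ≤ ⨆ j, ‖δ (a j)‖ := Real.iSup_nonneg fun j => norm_nonneg _
  have hT : (0:ℝ) ≤ ∑ j, |t j| := Finset.sum_nonneg fun j _ => abs_nonneg _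
  rcases subsingleton_or_nontrivial A with hS | hN
  · have h0 : (List.ofFn fun j => NormedSpace.exp ((Complex.I * (t j : ℂ)) • a j) - 1).prod = 0 :=
      Subsingleton.elim _ _
    rw [h0, map_zero, norm_zero, add_zero]
    positivity
  obtain ⟨m, rfl⟩ : ∃ m, n = m + 1 := ⟨n - 1, (Nat.succ_pred_eq_of_pos hn).symm⟩
  set c₁ := ⨆ j, ‖a j‖ with hc₁def
  set c₂ := ⨆ j, ‖δ (a j)‖ with hc₂def
  set f : Fin (m+1) → A := fun j => NormedSpace.exp ((Complex.I * (t j : ℂ)) • a j) - 1 with hfdef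
  have hsm : ∀ j, (Complex.I * (t j : ℂ)) • a j = (t j) • (I • a j) := by
    intro j; rw [← Complex.coe_smul, smul_smul, mul_comm]
  have hfj : ∀ j, f j = NormedSpace.exp (t j • (I • a j)) - 1 := by
    intro j; rw [hfdef]; simp only; rw [hsm j]
  have hle1 : ∀ j, ‖a j‖ ≤ c₁ := fun j => le_ciSup (Finite.bddAbove_range fun j => ‖a j‖) j
  have hle2 : ∀ j, ‖δ (a j)‖ ≤ c₂ := fun j => le_ciSup (Finite.bddAbove_range fun j => ‖δ (a j)‖) j
  have hf2 : ∀ j, ‖f j‖ ≤ 2 := by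
    intro j
    rw [hfj j]
    calc ‖NormedSpace.exp (t j • (I • a j)) - 1‖ ≤ ‖NormedSpace.exp (t j • (I • a j))‖ + ‖(1:A)‖ := norm_sub_le _ _
      _ ≤ 2 := by
        rw [CStarRing.norm_of_mem_unitary (my_unitary _ (ha j) _), norm_one]
        norm_num
  have hfa : ∀ j, ‖f j‖ ≤ |t j| * c₁ := by
    intro j
    rw [hfj j]
    exact le_trans (lemA _ (ha j) (t j)) (mul_le_mul_of_nonneg_left (hle1 j) (abs_nonneg _))
  have hfd : ∀ j, ‖δ (f j)‖ ≤ |t j| * c₂ := by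
    intro j
    rw [hfj j, map_sub, derivation_one δ hδ, sub_zero]
    exact le_trans (lemB δ hδ _ (ha j) (t j)) (mul_le_mul_of_nonneg_left (hle2 j) (abs_nonneg _))
  have hsplit : (List.ofFn f) = f 0 :: List.ofFn fun i : Fin m => f i.succ := List.ofFn_succ (f := f)
  have hrestlen : (List.ofFn fun i : Fin m => f i.succ).length = m := List.length_ofFn
  have hP : ‖(List.ofFn f).prod‖ ≤ |t 0| * c₁ * 2 ^ m := by
    rw [hsplit, List.prod_cons]
    calc ‖f 0 * (List.ofFn fun i : Fin m => f i.succ).prod‖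
        ≤ ‖f 0‖ * ‖(List.ofFn fun i : Fin m => f i.succ).prod‖ := norm_mul_le _ _
      _ ≤ (|t 0| * c₁) * 2 ^ m := by
        refine mul_le_mul (hfa 0) ?_ (norm_nonneg _) (by positivity)
        have := listnorm (List.ofFn fun i : Fin m => f i.succ) (by
          intro x hx
          obtain ⟨i, rfl⟩ := List.mem_ofFn.mp hx
          exact hf2 _)
        rwa [hrestlen] at this
  have hδP : ‖δ (List.ofFn f).prod‖ ≤ 2 ^ m * (c₂ * ∑ j, |t j|) := by
    have h := listdelta δ hδ (List.ofFn fun i : Fin m => f i.succ) (f 0) (by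
      intro y hy
      rw [← hsplit] at hy
      obtain ⟨i, rfl⟩ := List.mem_ofFn.mp hy
      exact hf2 _)
    rw [hrestlen, ← hsplit] at h
    refine le_trans h ?_
    have hsum : ((List.ofFn f).map fun y => ‖δ y‖).sum = ∑ j, ‖δ (f j)‖ := by
      rw [List.map_ofFn, List.sum_ofFn]; rfl
    rw [hsum]
    have : ∑ j, ‖δ (f j)‖ ≤ c₂ * ∑ j, |t j| := by
      rw [Finset.mul_sum]
      exact Finset.sum_le_sum fun j _ => le_trans (hfd j) (le_of_eq (mul_comm _ _))
    exact mul_le_mul_of_nonneg_left this (by positivity)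
  have ht0 : |t 0| ≤ ∑ j, |t j| :=
    Finset.single_le_sum (fun j _ => abs_nonneg (t j)) (Finset.mem_univ 0)
  have hmn : m + 1 - 1 = m := rfl
  rw [hmn]
  have h2m : (0:ℝ) < 2 ^ m := by positivity
  calc ‖(List.ofFn f).prod‖ + ‖δ (List.ofFn f).prod‖
      ≤ |t 0| * c₁ * 2 ^ m + 2 ^ m * (c₂ * ∑ j, |t j|) := add_le_add hP hδP
    _ ≤ 2 ^ m * (c₁ + c₂) * ∑ j, |t j| := by nlinarith [mul_nonneg (mul_nonneg h2m.le hc1) (sub_nonneg.mpr ht0)]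

end Aux

/-- For a bounded derivation `δ` on a unital C*-algebra and selfadjoint elements
`a₁, …, aₙ`, the product `P(t) = ∏ⱼ (exp(i tⱼ aⱼ) − 1)` satisfies
`‖P(t)‖ + ‖δ(P(t))‖ ≤ 2^(n−1) (maxⱼ ‖aⱼ‖ + maxⱼ ‖δ(aⱼ)‖) ∑ⱼ |tⱼ|`. -/
theorem derivation_expProdMinusOne_estimate {A : Type*} [CStarAlgebra A]
    (δ : A →L[ℂ] A) (hδ : ∀ x y : A, δ (x * y) = δ x * y + x * δ y)
    {n : ℕ} (hn : 1 ≤ n) (a : Fin n → A) (ha : ∀ j, IsSelfAdjoint (a j))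
    (t : Fin n → ℝ) :
    ‖expProdMinusOne a t‖ + ‖δ (expProdMinusOne a t)‖
      ≤ 2 ^ (n - 1) * ((⨆ j, ‖a j‖) + ⨆ j, ‖δ (a j)‖) * ∑ j, |t j| := by
  exact main_thm δ hδ hn a ha t
end

section
/- For every ε ∈ (0, 1/2) there is a constant C > 0, depending only on ε, with the following property: for every unital complex C*-algebra A, every selfadjoint element D ∈ A, and every a ∈ A, ‖f_ε(D)·a − a·f_ε(D)‖ ≤ C·‖D·a − a·D‖, where f_ε(D) denotes the continuous functional calculus of D applied to the function f_ε(x) = (1 + x²)^{1/2 − ε}. -/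
universe u

open MeasureTheory Real Set Filter

namespace CfcCommutatorEstimateAux

/-- `exp (c*v)` is integrable on `Iic b` when `0 < c`. -/
lemma integrableOn_exp_mul_Iic {c : ℝ} (hc : 0 < c) (b : ℝ) :
    IntegrableOn (fun v : ℝ => Real.exp (c * v)) (Iic b) := by
  refine integrableOn_Iic_of_intervalIntegral_norm_bounded (Real.exp (c * b) / c) b
    (fun y => ((Real.continuous_exp.comp (continuous_const.mul continuous_id)).integrableOn_Ioc))
    tendsto_id (Eventually.of_forall fun y => ?_)
  simp_rw [norm_of_nonneg (Real.exp_pos _).le]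
  rw [intervalIntegral.integral_comp_mul_left (fun u => Real.exp u) hc.ne']
  rw [integral_exp]
  rw [smul_eq_mul]
  rw [div_eq_inv_mul]
  gcongr
  linarith [Real.exp_pos (c * id y)]

/-- The basic integrable kernel: `exp (c*v) * (exp v + 1) ^ (-p)` for `0 < c < p`. -/
lemma integrable_kernel {c p : ℝ} (hc : 0 < c) (hcp : c < p) :
    Integrable (fun v : ℝ => Real.exp (c * v) * (Real.exp v + 1) ^ (-p)) := by
  have hpos : ∀ v : ℝ, (0:ℝ) < Real.exp v + 1 := fun v => by positivity
  have hcont : Continuous fun v : ℝ => Real.exp (c * v) * (Real.exp v + 1) ^ (-p) := by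
    refine Continuous.mul (by fun_prop) ?_
    refine continuous_iff_continuousAt.mpr fun v => ?_
    exact ContinuousAt.rpow_const (by fun_prop) (Or.inl (hpos v).ne')
  rw [← integrableOn_univ, ← Set.Iic_union_Ioi (a := (0:ℝ))]
  refine IntegrableOn.union ?_ ?_
  · refine Integrable.mono' (integrableOn_exp_mul_Iic hc 0) hcont.aestronglyMeasurable.restrict
      (Eventually.of_forall fun v => ?_)
    have h1 : (Real.exp v + 1) ^ (-p) ≤ 1 :=
      Real.rpow_le_one_of_one_le_of_nonpos (by linarith [Real.exp_pos v]) (by linarith)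
    have h2 : (0:ℝ) ≤ (Real.exp v + 1) ^ (-p) := Real.rpow_nonneg (hpos v).le _
    rw [norm_of_nonneg (by positivity)]
    calc Real.exp (c * v) * (Real.exp v + 1) ^ (-p) ≤ Real.exp (c * v) * 1 := by
          gcongr
      _ = Real.exp (c * v) := mul_one _
  · have hint : IntegrableOn (fun v : ℝ => Real.exp (-(p - c) * v)) (Ioi 0) :=
      exp_neg_integrableOn_Ioi 0 (by linarith)
    refine Integrable.mono' hint hcont.aestronglyMeasurable.restrict
      (Eventually.of_forall fun v => ?_)
    rw [norm_of_nonneg (by positivity)]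
    have h1 : (Real.exp v + 1) ^ (-p) ≤ (Real.exp v) ^ (-p) :=
      Real.rpow_le_rpow_of_nonpos (Real.exp_pos v) (by linarith) (by linarith)
    have h2 : (Real.exp v) ^ (-p) = Real.exp (-p * v) := by
      rw [← Real.exp_mul, mul_comm]
    calc Real.exp (c * v) * (Real.exp v + 1) ^ (-p)
        ≤ Real.exp (c * v) * Real.exp (-p * v) := by gcongr; rw [← h2] at *; exact h1
      _ = Real.exp (-(p - c) * v) := by rw [← Real.exp_add]; ring_nf

lemma integrable_ker {s : ℝ} (hs0 : 0 < s) (hs1 : s < 1) :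
    Integrable (fun v : ℝ => Real.exp (s * v) * (Real.exp v + 1)⁻¹) := by
  have h := integrable_kernel hs0 hs1
  simpa [Real.rpow_neg_one] using h

lemma ker_pos {s : ℝ} (hs0 : 0 < s) (hs1 : s < 1) :
    0 < ∫ v : ℝ, Real.exp (s * v) * (Real.exp v + 1)⁻¹ := by
  rw [integral_pos_iff_support_of_nonneg (fun v => by positivity) (integrable_ker hs0 hs1)]
  have hsup : Function.support (fun v : ℝ => Real.exp (s * v) * (Real.exp v + 1)⁻¹)
      = Set.univ := by
    ext v
    simp only [Function.mem_support, Set.mem_univ, iff_true]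
    positivity
  rw [hsup]
  simp [Real.volume_univ]

lemma integral_translate {s t : ℝ} (ht : 0 < t) :
    ∫ v : ℝ, Real.exp (s * v) * (t * (Real.exp v + t)⁻¹)
      = t ^ s * ∫ v : ℝ, Real.exp (s * v) * (Real.exp v + 1)⁻¹ := by
  rw [← MeasureTheory.integral_add_right_eq_self
    (fun v => Real.exp (s * v) * (t * (Real.exp v + t)⁻¹)) (Real.log t)]
  rw [← integral_const_mul]
  congr 1
  funext v
  have hev : (0:ℝ) < Real.exp v := Real.exp_pos v
  have h1 : Real.exp (v + Real.log t) = Real.exp v * t := by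
    rw [Real.exp_add, Real.exp_log ht]
  have h2 : Real.exp (s * (v + Real.log t)) = Real.exp (s * v) * t ^ s := by
    rw [mul_add, Real.exp_add, Real.rpow_def_of_pos ht, mul_comm (Real.log t) s]
  rw [h1, h2]
  rw [show Real.exp v * t + t = (Real.exp v + 1) * t by ring, mul_inv]
  field_simp

lemma rpow_three_halves {m : ℝ} (hm : 0 ≤ m) :
    ((m + 1) * Real.sqrt (m + 1))⁻¹ = (m + 1) ^ (-(3:ℝ)/2) := by
  have h1 : (0:ℝ) < m + 1 := by linarith
  rw [show (-(3:ℝ)/2) = -(1 + 1/2) by norm_num, Real.rpow_neg h1.le, Real.rpow_add h1,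
    Real.rpow_one, Real.sqrt_eq_rpow]

lemma amgm_bound {m x : ℝ} (hm : 0 ≤ m) : |(m + 1 + x ^ 2)⁻¹ * x| ≤ (2 * Real.sqrt (m + 1))⁻¹ := by
  have h1 : (0:ℝ) < m + 1 := by linarith
  have hs : (0:ℝ) < Real.sqrt (m + 1) := Real.sqrt_pos.mpr h1
  have hsq : Real.sqrt (m + 1) ^ 2 = m + 1 := Real.sq_sqrt h1.le
  have hden : (0:ℝ) < m + 1 + x ^ 2 := by positivity
  have key : 2 * Real.sqrt (m + 1) * |x| ≤ m + 1 + x ^ 2 := by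
    nlinarith [sq_nonneg (Real.sqrt (m + 1) - |x|), sq_abs x]
  rw [abs_mul, abs_inv, abs_of_pos hden]
  have h2 : (0:ℝ) < 2 * Real.sqrt (m + 1) := by positivity
  rw [inv_mul_le_iff₀ hden, le_mul_inv_iff₀ h2]
  nlinarith [key]

lemma resolvent_comm_bound {A : Type u} [CStarAlgebra A] (D a : A) (hD : IsSelfAdjoint D)
    {m : ℝ} (hm : 0 < m) :
    ‖cfc (fun x : ℝ => (m + 1 + x ^ 2)⁻¹) D * a - a * cfc (fun x : ℝ => (m + 1 + x ^ 2)⁻¹) D‖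
      ≤ ((m + 1) * Real.sqrt (m + 1))⁻¹ * ‖D * a - a * D‖ := by
  have hden : ∀ x : ℝ, (0:ℝ) < m + 1 + x ^ 2 := fun x => by positivity
  have hcont_inv : Continuous fun x : ℝ => (m + 1 + x ^ 2)⁻¹ :=
    Continuous.inv₀ (by fun_prop) fun x => (hden x).ne'
  have hcontX : Continuous fun x : ℝ => m + 1 + x ^ 2 := by fun_prop
  set u := cfc (fun x : ℝ => (m + 1 + x ^ 2)⁻¹) D with hu
  set X := cfc (fun x : ℝ => m + 1 + x ^ 2) D with hX
  have huX : u * X = 1 := by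
    rw [hu, hX, ← cfc_mul _ _ D hcont_inv.continuousOn hcontX.continuousOn,
      cfc_congr (g := fun _ : ℝ => (1:ℝ)) (fun x _ => inv_mul_cancel₀ (hden x).ne')]
    exact cfc_const_one ℝ D
  have hXu : X * u = 1 := by
    rw [hu, hX, ← cfc_mul _ _ D hcontX.continuousOn hcont_inv.continuousOn,
      cfc_congr (g := fun _ : ℝ => (1:ℝ)) (fun x _ => mul_inv_cancel₀ (hden x).ne')]
    exact cfc_const_one ℝ D
  have hXeq : X = (m + 1) • (1:A) + D * D := by
    rw [hX]
    have h1 : cfc (fun x : ℝ => m + 1 + x ^ 2) D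
        = cfc (fun _ : ℝ => m + 1) D + cfc (fun x : ℝ => x ^ 2) D :=
      cfc_add D (fun _ : ℝ => m + 1) (fun x : ℝ => x ^ 2)
    rw [h1, cfc_const (m + 1) D, cfc_pow_id D 2, Algebra.algebraMap_eq_smul_one, sq]
  have hcommX : a * X - X * a = -(D * (D * a - a * D) + (D * a - a * D) * D) := by
    rw [hXeq]
    simp only [mul_add, add_mul, mul_smul_comm, smul_mul_assoc, mul_one, one_mul]
    noncomm_ring
  have hkey : u * a - a * u = u * (a * X - X * a) * u := by
    have e1 : u * (a * X) * u = u * a := by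
      rw [show u * (a * X) * u = (u * a) * (X * u) by noncomm_ring, hXu, mul_one]
    have e2 : u * (X * a) * u = a * u := by
      rw [show u * (X * a) * u = (u * X) * (a * u) by noncomm_ring, huX, one_mul]
    calc u * a - a * u = u * (a * X) * u - u * (X * a) * u := by rw [e1, e2]
      _ = u * (a * X - X * a) * u := by noncomm_ring
  have hfinal : u * a - a * u
      = -((u * D) * (D * a - a * D) * u + u * (D * a - a * D) * (D * u)) := by
    rw [hkey, hcommX]
    noncomm_ring
  have hnu : ‖u‖ ≤ (m + 1)⁻¹ := by
    refine norm_cfc_le (by positivity) fun x _ => ?_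
    rw [Real.norm_eq_abs, abs_of_pos (by positivity)]
    exact inv_anti₀ (by positivity) (by nlinarith [sq_nonneg x])
  have huD : u * D = cfc (fun x : ℝ => (m + 1 + x ^ 2)⁻¹ * x) D := by
    rw [cfc_mul (fun x : ℝ => (m + 1 + x ^ 2)⁻¹) (fun x : ℝ => x) D hcont_inv.continuousOn
      continuous_id.continuousOn, cfc_id' ℝ D, hu]
  have hDu : D * u = cfc (fun x : ℝ => x * (m + 1 + x ^ 2)⁻¹) D := by
    rw [cfc_mul (fun x : ℝ => x) (fun x : ℝ => (m + 1 + x ^ 2)⁻¹) D continuous_id.continuousOn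
      hcont_inv.continuousOn, cfc_id' ℝ D, hu]
  have hnuD : ‖u * D‖ ≤ (2 * Real.sqrt (m + 1))⁻¹ := by
    rw [huD]
    refine norm_cfc_le (by positivity) fun x _ => ?_
    rw [Real.norm_eq_abs]
    exact amgm_bound (x := x) hm.le
  have hnDu : ‖D * u‖ ≤ (2 * Real.sqrt (m + 1))⁻¹ := by
    rw [hDu]
    refine norm_cfc_le (by positivity) fun x _ => ?_
    rw [Real.norm_eq_abs, mul_comm]
    exact amgm_bound (x := x) hm.le
  have hs : (0:ℝ) < Real.sqrt (m + 1) := Real.sqrt_pos.mpr (by linarith)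
  calc ‖u * a - a * u‖
      = ‖(u * D) * (D * a - a * D) * u + u * (D * a - a * D) * (D * u)‖ := by
        rw [hfinal, norm_neg]
    _ ≤ ‖(u * D) * (D * a - a * D) * u‖ + ‖u * (D * a - a * D) * (D * u)‖ := norm_add_le _ _
    _ ≤ ‖u * D‖ * ‖D * a - a * D‖ * ‖u‖ + ‖u‖ * ‖D * a - a * D‖ * ‖D * u‖ := by
        gcongr <;>
          exact (norm_mul_le _ _).trans
            (mul_le_mul_of_nonneg_right (norm_mul_le _ _) (norm_nonneg _))
    _ ≤ (2 * Real.sqrt (m + 1))⁻¹ * ‖D * a - a * D‖ * (m + 1)⁻¹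
          + (m + 1)⁻¹ * ‖D * a - a * D‖ * (2 * Real.sqrt (m + 1))⁻¹ := by
        gcongr
    _ = ((m + 1) * Real.sqrt (m + 1))⁻¹ * ‖D * a - a * D‖ := by
        field_simp
        ring

end CfcCommutatorEstimateAux

open CfcCommutatorEstimateAux

/-- For every `ε ∈ (0, 1/2)` there is a constant `C > 0`, depending only on `ε`, such that in
every unital C*-algebra, for every selfadjoint `D` and every `a`,
`‖(1 + D²)^(1/2 − ε) a − a (1 + D²)^(1/2 − ε)‖ ≤ C ‖D a − a D‖`, where `(1 + D²)^(1/2 − ε)`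
is the continuous functional calculus of `x ↦ (1 + x²)^(1/2 − ε)` applied to `D`. -/
theorem cfc_one_add_sq_rpow_commutator_estimate (ε : ℝ) (hε₀ : 0 < ε) (hε : ε < 1 / 2) :
    ∃ C > 0, ∀ (A : Type u) [CStarAlgebra A], ∀ D a : A, IsSelfAdjoint D →
      ‖cfc (fun x : ℝ => (1 + x ^ 2) ^ (1 / 2 - ε)) D * a
          - a * cfc (fun x : ℝ => (1 + x ^ 2) ^ (1 / 2 - ε)) D‖
        ≤ C * ‖D * a - a * D‖ := by
  obtain ⟨s, hs_def⟩ : ∃ t : ℝ, t = 1 / 2 - ε := ⟨_, rfl⟩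
  have hs0 : 0 < s := by rw [hs_def]; linarith
  have hs1 : s < 1 / 2 := by rw [hs_def]; linarith
  have hs2 : s < 1 := by linarith
  obtain ⟨I, hI_def⟩ : ∃ r : ℝ, r = ∫ v : ℝ, Real.exp (s * v) * (Real.exp v + 1)⁻¹ := ⟨_, rfl⟩
  have hIpos : 0 < I := by rw [hI_def]; exact ker_pos hs0 hs2
  have hJint : Integrable
      (fun v : ℝ => Real.exp ((s + 1) * v) * (Real.exp v + 1) ^ (-(3:ℝ)/2)) := by
    have h := integrable_kernel (c := s + 1) (p := (3:ℝ)/2) (by linarith) (by linarith)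
    simpa [neg_div] using h
  obtain ⟨J, hJ_def⟩ : ∃ r : ℝ,
      r = ∫ v : ℝ, Real.exp ((s + 1) * v) * (Real.exp v + 1) ^ (-(3:ℝ)/2) := ⟨_, rfl⟩
  have hJ0 : 0 ≤ J := by
    rw [hJ_def]
    exact integral_nonneg fun v => by positivity
  have hC : 0 < I⁻¹ * J + 1 :=
    add_pos_of_nonneg_of_pos (mul_nonneg (inv_nonneg.mpr hIpos.le) hJ0) one_pos
  refine ⟨I⁻¹ * J + 1, hC, ?_⟩
  intro A _ D a hD
  rcases subsingleton_or_nontrivial A with hsub | hnt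
  · have h0 : (cfc (fun x : ℝ => (1 + x ^ 2) ^ (1 / 2 - ε)) D * a
        - a * cfc (fun x : ℝ => (1 + x ^ 2) ^ (1 / 2 - ε)) D) = 0 := Subsingleton.elim _ _
    rw [h0, norm_zero]
    exact mul_nonneg hC.le (norm_nonneg _)
  set g : ℝ → ℝ → ℝ :=
    fun v x => Real.exp (s * v) - Real.exp ((s + 1) * v) * (Real.exp v + 1 + x ^ 2)⁻¹ with hg_def
  have hden : ∀ v x : ℝ, (0:ℝ) < Real.exp v + 1 + x ^ 2 := fun v x => by positivity
  have hg_eq : ∀ v x : ℝ,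
      g v x = Real.exp (s * v) * ((1 + x ^ 2) * (Real.exp v + (1 + x ^ 2))⁻¹) := by
    intro v x
    have h1 : Real.exp ((s + 1) * v) = Real.exp (s * v) * Real.exp v := by
      rw [← Real.exp_add]; ring_nf
    have h2 : (0:ℝ) < Real.exp v + (1 + x ^ 2) := by positivity
    rw [hg_def]
    simp only
    rw [h1, show Real.exp v + 1 + x ^ 2 = Real.exp v + (1 + x ^ 2) by ring]
    field_simp
    ring
  have hg_nonneg : ∀ v x : ℝ, 0 ≤ g v x := by
    intro v x
    rw [hg_eq]
    positivity
  have hgcont : ∀ v : ℝ, Continuous (g v) := by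
    intro v
    exact Continuous.sub continuous_const
      (Continuous.mul continuous_const
        (Continuous.inv₀ (by fun_prop) fun x => (hden v x).ne'))
  -- scalar representation
  have hscalar : ∀ x : ℝ, (∫ v : ℝ, g v x) = (1 + x ^ 2) ^ s * I := by
    intro x
    have ht : (0:ℝ) < 1 + x ^ 2 := by positivity
    calc (∫ v : ℝ, g v x)
        = ∫ v : ℝ, Real.exp (s * v) * ((1 + x ^ 2) * (Real.exp v + (1 + x ^ 2))⁻¹) := by
          exact integral_congr_ae (Eventually.of_forall fun v => hg_eq v x)
      _ = (1 + x ^ 2) ^ s * I := by rw [hI_def]; exact integral_translate ht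
  -- the bound for cfc_integral'
  set R : ℝ := 1 + ‖D‖ ^ 2 with hR_def
  have hR1 : (1:ℝ) ≤ R := by rw [hR_def]; nlinarith [sq_nonneg ‖D‖]
  have hR0 : (0:ℝ) ≤ R := le_trans zero_le_one hR1
  have hbound : ∀ v : ℝ, ∀ x ∈ spectrum ℝ D,
      ‖g v x‖ ≤ ‖R * (Real.exp (s * v) * (Real.exp v + 1)⁻¹)‖ := by
    intro v x hx
    have hxD : |x| ≤ ‖D‖ := by
      simpa [Real.norm_eq_abs] using spectrum.norm_le_norm_of_mem hx
    have hx2 : x ^ 2 ≤ ‖D‖ ^ 2 := by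
      rw [← sq_abs]
      exact pow_le_pow_left₀ (abs_nonneg x) hxD 2
    have ht1 : (1:ℝ) ≤ 1 + x ^ 2 := by nlinarith [sq_nonneg x]
    have htR : 1 + x ^ 2 ≤ R := by rw [hR_def]; linarith
    have hev : (0:ℝ) < Real.exp v := Real.exp_pos v
    rw [norm_of_nonneg (hg_nonneg v x),
      norm_of_nonneg (mul_nonneg hR0 (by positivity)), hg_eq]
    simp only [← div_eq_mul_inv]
    have key : (1 + x ^ 2) / (Real.exp v + (1 + x ^ 2)) ≤ R / (Real.exp v + 1) := by
      rw [div_le_div_iff₀ (by positivity) (by positivity)]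
      nlinarith
    calc Real.exp (s * v) * ((1 + x ^ 2) / (Real.exp v + (1 + x ^ 2)))
        ≤ Real.exp (s * v) * (R / (Real.exp v + 1)) := by
          have := Real.exp_pos (s * v)
          exact mul_le_mul_of_nonneg_left key this.le
      _ = R * (Real.exp (s * v) / (Real.exp v + 1)) := by ring
  have hbound_int : Integrable (fun v : ℝ => R * (Real.exp (s * v) * (Real.exp v + 1)⁻¹)) :=
    (integrable_ker hs0 hs2).const_mul R
  -- continuity of the uncurried family
  have huncurry : Continuous (Function.uncurry fun v => (spectrum ℝ D).restrict (g v)) := by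
    have : Continuous fun p : ℝ × (spectrum ℝ D) =>
        Real.exp (s * p.1) - Real.exp ((s + 1) * p.1)
          * (Real.exp p.1 + 1 + ((p.2 : ℝ)) ^ 2)⁻¹ := by
      refine Continuous.sub (by fun_prop) (Continuous.mul (by fun_prop)
        (Continuous.inv₀ (by fun_prop) fun p => (hden p.1 (p.2 : ℝ)).ne'))
    exact this
  -- exchange cfc and integral
  have h_cfc_int : cfc (fun x : ℝ => ∫ v : ℝ, g v x) D = ∫ v : ℝ, cfc (g v) D :=
    cfc_integral g (fun v => ‖R * (Real.exp (s * v) * (Real.exp v + 1)⁻¹)‖) D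
      (by
        have hc2 : Continuous fun p : ℝ × ℝ =>
            Real.exp (s * p.1) - Real.exp ((s + 1) * p.1) * (Real.exp p.1 + 1 + p.2 ^ 2)⁻¹ :=
          Continuous.sub (by fun_prop) (Continuous.mul (by fun_prop)
            (Continuous.inv₀ (by fun_prop) fun p => (hden p.1 p.2).ne'))
        exact hc2.continuousOn)
      (Eventually.of_forall hbound) hbound_int.norm.hasFiniteIntegral hD
  -- integrability of the A-valued family
  set K := spectrum ℝ D
  let fc : ℝ → C(K, ℝ) := fun v => ⟨K.restrict (g v), (hgcont v).continuousOn.restrict⟩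
  have hfc_cont : Continuous fc := (ContinuousMap.curry ⟨_, huncurry⟩).continuous
  have hfc_int : Integrable fc := by
    refine ⟨hfc_cont.aestronglyMeasurable, hbound_int.hasFiniteIntegral.mono
      (Eventually.of_forall fun v => ?_)⟩
    rw [ContinuousMap.norm_le _ (norm_nonneg _)]
    rintro ⟨x, hx⟩
    exact hbound v x hx
  have h_int_A : Integrable (fun v : ℝ => cfc (g v) D) := by
    have heq : (fun v : ℝ => cfc (g v) D) = fun v => cfcL (R := ℝ) hD (fc v) := by
      funext v
      rw [cfc_apply (g v) D hD (hgcont v).continuousOn]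
      rfl
    rw [heq]
    exact (cfcL (R := ℝ) hD).integrable_comp hfc_int
  -- representation of cfc f D
  have hcont_int : Continuous fun x : ℝ => ∫ v : ℝ, g v x := by
    have : (fun x : ℝ => ∫ v : ℝ, g v x) = fun x : ℝ => (1 + x ^ 2) ^ s * I :=
      funext hscalar
    rw [this]
    refine Continuous.mul ?_ continuous_const
    exact continuous_iff_continuousAt.2 fun x =>
      ContinuousAt.rpow_const (by fun_prop) (Or.inl (by positivity))
  have hT : cfc (fun x : ℝ => (1 + x ^ 2) ^ (1 / 2 - ε)) D = I⁻¹ • ∫ v : ℝ, cfc (g v) D := by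
    rw [← h_cfc_int, ← cfc_const_mul I⁻¹ (fun x : ℝ => ∫ v : ℝ, g v x) D hcont_int.continuousOn]
    refine cfc_congr fun x _ => ?_
    rw [hscalar x, mul_comm ((1 + x ^ 2) ^ s) I, ← mul_assoc, inv_mul_cancel₀ hIpos.ne',
      one_mul, hs_def]
  -- the commutator CLM
  set L : A →L[ℝ] A := (ContinuousLinearMap.mul ℝ A).flip a - ContinuousLinearMap.mul ℝ A a
    with hL_def
  have hL : ∀ z : A, L z = z * a - a * z := fun z => rfl
  have hTcomm : cfc (fun x : ℝ => (1 + x ^ 2) ^ (1 / 2 - ε)) D * a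
      - a * cfc (fun x : ℝ => (1 + x ^ 2) ^ (1 / 2 - ε)) D
      = I⁻¹ • ∫ v : ℝ, (cfc (g v) D * a - a * cfc (g v) D) := by
    rw [hT, smul_mul_assoc, mul_smul_comm, ← smul_sub]
    congr 1
    have h1 := L.integral_comp_comm h_int_A
    calc (∫ v : ℝ, cfc (g v) D) * a - a * ∫ v : ℝ, cfc (g v) D
        = L (∫ v : ℝ, cfc (g v) D) := (hL _).symm
      _ = ∫ v : ℝ, L (cfc (g v) D) := h1.symm
      _ = ∫ v : ℝ, (cfc (g v) D * a - a * cfc (g v) D) := by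
          exact integral_congr_ae (Eventually.of_forall fun v => hL _)
  -- pointwise norm bound
  have hpt : ∀ v : ℝ, ‖cfc (g v) D * a - a * cfc (g v) D‖
      ≤ Real.exp ((s + 1) * v) * (Real.exp v + 1) ^ (-(3:ℝ)/2) * ‖D * a - a * D‖ := by
    intro v
    set m : ℝ := Real.exp v with hm_def
    have hm : 0 < m := Real.exp_pos v
    set uv := cfc (fun x : ℝ => (m + 1 + x ^ 2)⁻¹) D with huv_def
    have hgv : cfc (g v) D = Real.exp (s * v) • (1:A) - Real.exp ((s + 1) * v) • uv := by
      have hcontinv : Continuous fun x : ℝ => (m + 1 + x ^ 2)⁻¹ :=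
        Continuous.inv₀ (by fun_prop) fun x => (by positivity)
      have h1 : cfc (g v) D
          = cfc (fun _ : ℝ => Real.exp (s * v)) D
            - cfc (fun x : ℝ => Real.exp ((s + 1) * v) * (m + 1 + x ^ 2)⁻¹) D :=
        cfc_sub (fun _ : ℝ => Real.exp (s * v))
          (fun x : ℝ => Real.exp ((s + 1) * v) * (m + 1 + x ^ 2)⁻¹) D
          continuous_const.continuousOn (continuous_const.mul hcontinv).continuousOn
      rw [h1, cfc_const _ D, cfc_const_mul _ _ D hcontinv.continuousOn,
        Algebra.algebraMap_eq_smul_one]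
    have hcomm : cfc (g v) D * a - a * cfc (g v) D
        = Real.exp ((s + 1) * v) • (a * uv - uv * a) := by
      rw [hgv]
      simp only [sub_mul, mul_sub, smul_mul_assoc, mul_smul_comm, one_mul, mul_one, smul_sub]
      abel
    rw [hcomm, norm_smul, Real.norm_eq_abs, abs_of_pos (Real.exp_pos _)]
    have h2 : ‖a * uv - uv * a‖ = ‖uv * a - a * uv‖ := by
      rw [← norm_neg, neg_sub]
    rw [h2, mul_assoc]
    gcongr _ * ?_
    calc ‖uv * a - a * uv‖ ≤ ((m + 1) * Real.sqrt (m + 1))⁻¹ * ‖D * a - a * D‖ :=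
          resolvent_comm_bound D a hD hm
      _ = (Real.exp v + 1) ^ (-(3:ℝ)/2) * ‖D * a - a * D‖ := by
          rw [rpow_three_halves hm.le]
  -- put everything together
  rw [hTcomm, norm_smul, Real.norm_eq_abs, abs_of_pos (by positivity : (0:ℝ) < I⁻¹)]
  have hnorm_int : ‖∫ v : ℝ, (cfc (g v) D * a - a * cfc (g v) D)‖ ≤ J * ‖D * a - a * D‖ := by
    have hint2 : Integrable (fun v : ℝ =>
        Real.exp ((s + 1) * v) * (Real.exp v + 1) ^ (-(3:ℝ)/2) * ‖D * a - a * D‖) :=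
      hJint.mul_const _
    calc ‖∫ v : ℝ, (cfc (g v) D * a - a * cfc (g v) D)‖
        ≤ ∫ v : ℝ, Real.exp ((s + 1) * v) * (Real.exp v + 1) ^ (-(3:ℝ)/2) * ‖D * a - a * D‖ :=
          norm_integral_le_of_norm_le hint2 (Eventually.of_forall hpt)
      _ = J * ‖D * a - a * D‖ := by rw [integral_mul_const, hJ_def]
  calc I⁻¹ * ‖∫ v : ℝ, (cfc (g v) D * a - a * cfc (g v) D)‖
      ≤ I⁻¹ * (J * ‖D * a - a * D‖) := by gcongr
    _ ≤ (I⁻¹ * J + 1) * ‖D * a - a * D‖ := by nlinarith [norm_nonneg (D * a - a * D)]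
end

section
/- Let 𝒜 be a Banach algebra, H a complex Hilbert space, π : 𝒜 → B(H) a continuous algebra homomorphism, and D a closed, densely defined linear operator on H such that π(a) ∈ Lip(D) for every a ∈ 𝒜. Assume that 𝒜 is B(H)-amenable for the bimodule structure induced by π, i.e., for every bounded linear map δ : 𝒜 → B(H) satisfying δ(ab) = π(a)δ(b) + δ(a)π(b) for all a, b ∈ 𝒜, there exists x ∈ B(H) with δ(a) = π(a)x − xπ(a) for all a ∈ 𝒜. Then there exists R ∈ B(H) such that [D − R, π(a)] = 0 for all a ∈ 𝒜; explicitly, for all a ∈ 𝒜 and all ξ ∈ Dom D: D(π(a)ξ) − π(a)(Dξ) = R(π(a)ξ) − π(a)(Rξ). If moreover γ ∈ B(H) is a selfadjoint unitary commuting with every π(a), mapping Dom D onto Dom D, and satisfying Dγ = −γD on Dom D, then R can be chosen odd, i.e. γR = −Rγ. -/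
open Filter Topology

/-- If `𝒜` is a `B(H)`-amenable Banach algebra (every bounded derivation `𝒜 → B(H)` for the
bimodule structure induced by `π` is inner), `π : 𝒜 → B(H)` a continuous algebra homomorphism
and `D` closed, densely defined with `π(a) ∈ Lip(D)` for all `a`, then there is `R ∈ B(H)`
with `[D − R, π(a)] = 0` for all `a`; and in the graded case `R` can be chosen odd. -/
theorem amenable_trivializing_bounded_perturbation
    {𝒜 : Type*} [NonUnitalNormedRing 𝒜] [NormedSpace ℂ 𝒜] [CompleteSpace 𝒜]
    {H : Type*} [NormedAddCommGroup H] [InnerProductSpace ℂ H] [CompleteSpace H]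
    (π : 𝒜 →L[ℂ] (H →L[ℂ] H)) (hπmul : ∀ a b : 𝒜, π (a * b) = π a * π b)
    (D : H →ₗ.[ℂ] H) (hDclosed : D.IsClosed) (hDdense : Dense (D.domain : Set H))
    (hmap : ∀ a : 𝒜, ∀ ξ ∈ D.domain, π a ξ ∈ D.domain)
    (hLip : ∀ a : 𝒜, ∃ b : H →L[ℂ] H, IsCommutatorBound D (π a) b)
    (hamen : ∀ δ : 𝒜 →L[ℂ] (H →L[ℂ] H),
      (∀ a b : 𝒜, δ (a * b) = π a * δ b + δ a * π b) →
      ∃ x : H →L[ℂ] H, ∀ a : 𝒜, δ a = π a * x - x * π a) :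
    (∃ R : H →L[ℂ] H, ∀ (a : 𝒜) (ξ : D.domain) (h : π a ξ.val ∈ D.domain),
        D ⟨π a ξ.val, h⟩ - π a (D ξ) = R (π a ξ.val) - π a (R ξ.val)) ∧
    ∀ γ : H →L[ℂ] H, IsSelfAdjoint γ → γ * γ = 1 →
      (∀ a : 𝒜, γ * π a = π a * γ) →
      (∀ ξ ∈ D.domain, γ ξ ∈ D.domain) →
      (∀ (ξ : D.domain) (h : γ ξ.val ∈ D.domain), D ⟨γ ξ.val, h⟩ = -(γ (D ξ))) →
      ∃ R : H →L[ℂ] H,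
        (∀ (a : 𝒜) (ξ : D.domain) (h : π a ξ.val ∈ D.domain),
          D ⟨π a ξ.val, h⟩ - π a (D ξ) = R (π a ξ.val) - π a (R ξ.val)) ∧
        γ * R = -(R * γ) := by
  classical
  choose E hE using hLip
  -- congruence lemma for D on the subtype
  have hDcongr : ∀ (x y : H) (hx : x ∈ D.domain) (hy : y ∈ D.domain), x = y →
      D ⟨x, hx⟩ = D ⟨y, hy⟩ := by
    rintro x y hx hy rfl; rfl
  have hEval : ∀ (a : 𝒜) (ξ : D.domain),
      E a ξ.val = D ⟨π a ξ.val, hmap a ξ.val ξ.2⟩ - π a (D ξ) :=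
    fun a ξ => hE a ξ (hmap a ξ.val ξ.2)
  -- uniqueness of bounded operators that agree on the dense domain
  have huniq : ∀ b b' : H →L[ℂ] H, (∀ ξ : D.domain, b ξ.val = b' ξ.val) → b = b' := by
    intro b b' h
    apply DFunLike.coe_injective
    exact Continuous.ext_on hDdense b.continuous b'.continuous fun x hx => h ⟨x, hx⟩
  -- linearity of E
  have hadd : ∀ a b : 𝒜, E (a + b) = E a + E b := by
    intro a b
    refine huniq _ _ fun ξ => ?_
    have hmem : π a ξ.val + π b ξ.val ∈ D.domain :=
      D.domain.add_mem (hmap a ξ.val ξ.2) (hmap b ξ.val ξ.2)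
    have h1 : D ⟨π (a + b) ξ.val, hmap (a + b) ξ.val ξ.2⟩
        = D ⟨π a ξ.val, hmap a ξ.val ξ.2⟩ + D ⟨π b ξ.val, hmap b ξ.val ξ.2⟩ := by
      rw [hDcongr _ (π a ξ.val + π b ξ.val) _ hmem (by rw [map_add π]; rfl)]
      exact D.map_add ⟨π a ξ.val, hmap a ξ.val ξ.2⟩ ⟨π b ξ.val, hmap b ξ.val ξ.2⟩
    rw [ContinuousLinearMap.add_apply, hEval, hEval, hEval, h1, map_add π]
    simp only [ContinuousLinearMap.add_apply]
    abel
  have hsmul : ∀ (c : ℂ) (a : 𝒜), E (c • a) = c • E a := by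
    intro c a
    refine huniq _ _ fun ξ => ?_
    have hmem : c • π a ξ.val ∈ D.domain := D.domain.smul_mem c (hmap a ξ.val ξ.2)
    have h1 : D ⟨π (c • a) ξ.val, hmap (c • a) ξ.val ξ.2⟩
        = c • D ⟨π a ξ.val, hmap a ξ.val ξ.2⟩ := by
      rw [hDcongr _ (c • π a ξ.val) _ hmem (by rw [map_smul π]; rfl)]
      exact D.map_smul c ⟨π a ξ.val, hmap a ξ.val ξ.2⟩
    rw [ContinuousLinearMap.smul_apply, hEval, hEval, h1, map_smul π]
    simp only [ContinuousLinearMap.smul_apply, smul_sub]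
  -- the derivation as a linear map
  let δ₀ : 𝒜 →ₗ[ℂ] (H →L[ℂ] H) :=
    { toFun := E, map_add' := hadd, map_smul' := hsmul }
  -- closed graph theorem: δ₀ is continuous
  have hcont : Continuous δ₀ := by
    apply δ₀.continuous_of_seq_closed_graph
    intro u x y hu hy
    refine huniq y (E x) fun ξ => ?_
    have hπu : Tendsto (fun n => π (u n)) atTop (𝓝 (π x)) := (π.continuous.tendsto x).comp hu
    have h1 : Tendsto (fun n => π (u n) ξ.val) atTop (𝓝 (π x ξ.val)) :=
      ((ContinuousLinearMap.apply ℂ H ξ.val).continuous.tendsto (π x)).comp hπu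
    have h4 : Tendsto (fun n => π (u n) (D ξ)) atTop (𝓝 (π x (D ξ))) :=
      ((ContinuousLinearMap.apply ℂ H (D ξ)).continuous.tendsto (π x)).comp hπu
    have h2 : Tendsto (fun n => E (u n) ξ.val) atTop (𝓝 (y ξ.val)) :=
      ((ContinuousLinearMap.apply ℂ H ξ.val).continuous.tendsto y).comp hy
    have h3 : ∀ n, (π (u n) ξ.val, E (u n) ξ.val + π (u n) (D ξ)) ∈ (D.graph : Set (H × H)) := by
      intro n
      have := hEval (u n) ξ
      have heq : E (u n) ξ.val + π (u n) (D ξ) = D ⟨π (u n) ξ.val, hmap (u n) ξ.val ξ.2⟩ := by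
        rw [this]; abel
      rw [heq]
      exact D.mem_graph ⟨π (u n) ξ.val, hmap (u n) ξ.val ξ.2⟩
    have htend : Tendsto (fun n => (π (u n) ξ.val, E (u n) ξ.val + π (u n) (D ξ))) atTop
        (𝓝 (π x ξ.val, y ξ.val + π x (D ξ))) := h1.prodMk_nhds (h2.add h4)
    have hlim : (π x ξ.val, y ξ.val + π x (D ξ)) ∈ (D.graph : Set (H × H)) :=
      hDclosed.mem_of_tendsto htend (Filter.Eventually.of_forall h3)
    rw [SetLike.mem_coe, D.mem_graph_iff] at hlim
    obtain ⟨z, hz1, hz2⟩ := hlim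
    have hz : z = ⟨π x ξ.val, hmap x ξ.val ξ.2⟩ := Subtype.ext hz1
    rw [hz] at hz2
    have hz2' : D ⟨π x ξ.val, hmap x ξ.val ξ.2⟩ = y ξ.val + π x (D ξ) := hz2
    rw [hEval x ξ, hz2']
    abel
  let δ : 𝒜 →L[ℂ] (H →L[ℂ] H) := ⟨δ₀, hcont⟩
  -- derivation property
  have hder : ∀ a b : 𝒜, δ (a * b) = π a * δ b + δ a * π b := by
    intro a b
    refine huniq _ _ fun ξ => ?_
    show E (a * b) ξ.val = (π a * E b + E a * π b) ξ.val
    set η : D.domain := ⟨π b ξ.val, hmap b ξ.val ξ.2⟩ with hη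
    have h1 : E (a * b) ξ.val
        = D ⟨π a (π b ξ.val), hmap a _ η.2⟩ - π a (π b (D ξ)) := by
      rw [hEval (a * b) ξ, hDcongr _ (π a (π b ξ.val)) _ (hmap a _ η.2)
        (by rw [hπmul]; rfl)]
      congr 1
      rw [hπmul]; rfl
    have h2 : E a (π b ξ.val) = D ⟨π a (π b ξ.val), hmap a _ η.2⟩ - π a (D η) := hEval a η
    have h3 : E b ξ.val = D η - π b (D ξ) := hEval b ξ
    simp only [ContinuousLinearMap.add_apply, ContinuousLinearMap.mul_apply, h1, h2, h3,
      map_sub]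
    abel
  -- amenability
  obtain ⟨x₀, hx₀⟩ := hamen δ hder
  -- the key commutator identity for R₀ = -x₀
  have hR : ∀ (a : 𝒜) (ξ : D.domain) (h : π a ξ.val ∈ D.domain),
      D ⟨π a ξ.val, h⟩ - π a (D ξ) = (-x₀) (π a ξ.val) - π a ((-x₀) ξ.val) := by
    intro a ξ h
    have h1 : E a ξ.val = D ⟨π a ξ.val, h⟩ - π a (D ξ) := hE a ξ h
    have h2 : E a ξ.val = π a (x₀ ξ.val) - x₀ (π a ξ.val) := by
      have := hx₀ a
      have : E a ξ.val = (π a * x₀ - x₀ * π a) ξ.val := by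
        rw [← this]; rfl
      simpa [ContinuousLinearMap.sub_apply, ContinuousLinearMap.mul_apply] using this
    rw [← h1, h2]
    simp only [ContinuousLinearMap.neg_apply, map_neg]
    abel
  constructor
  · exact ⟨-x₀, hR⟩
  · intro γ _hsa hγ2 hcomm hγmap hγanti
    set R₀ : H →L[ℂ] H := -x₀ with hR₀
    have hγγ : ∀ v : H, γ (γ v) = v := by
      intro v
      have := congrArg (fun T : H →L[ℂ] H => T v) hγ2
      simpa [ContinuousLinearMap.mul_apply] using this
    have hcommv : ∀ (a : 𝒜) (v : H), γ (π a v) = π a (γ v) := by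
      intro a v
      have := congrArg (fun T : H →L[ℂ] H => T v) (hcomm a)
      simpa [ContinuousLinearMap.mul_apply] using this
    refine ⟨(2⁻¹ : ℂ) • (R₀ - γ * R₀ * γ), ?_, ?_⟩
    · intro a ξ h
      have hγξ : γ ξ.val ∈ D.domain := hγmap ξ.val ξ.2
      set η : D.domain := ⟨γ ξ.val, hγξ⟩ with hη
      have hγπξ : γ (π a ξ.val) ∈ D.domain := hγmap _ h
      have hπγξ : π a (γ ξ.val) ∈ D.domain := hmap a _ η.2
      -- apply hR at η
      have key := hR a η hπγξ
      have hDη : D η = -(γ (D ξ)) := hγanti ξ hγξ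
      have hDπγ : D ⟨π a (γ ξ.val), hπγξ⟩ = -(γ (D ⟨π a ξ.val, h⟩)) := by
        rw [hDcongr _ (γ (π a ξ.val)) _ hγπξ (hcommv a ξ.val).symm]
        exact hγanti ⟨π a ξ.val, h⟩ hγπξ
      rw [hDπγ, hDη] at key
      -- key : -(γ (D ⟨π a ξ, h⟩)) - π a (-(γ (D ξ))) = R₀ (π a (γ ξ)) - π a (R₀ (γ ξ))
      -- apply γ to both sides
      have key2 : γ (-(γ (D ⟨π a ξ.val, h⟩)) - π a (-(γ (D ξ))))
          = γ (R₀ (π a (γ ξ.val)) - π a (R₀ (γ ξ.val))) := by rw [key]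
      have keyL : γ (-(γ (D ⟨π a ξ.val, h⟩)) - π a (-(γ (D ξ))))
          = -(D ⟨π a ξ.val, h⟩) + π a (D ξ) := by
        rw [map_sub, map_neg, hγγ, map_neg, map_neg, hcommv, hγγ]
        abel
      have keyR : γ (R₀ (π a (γ ξ.val)) - π a (R₀ (γ ξ.val)))
          = (γ * R₀ * γ) (π a ξ.val) - π a ((γ * R₀ * γ) ξ.val) := by
        rw [map_sub, hcommv]
        simp only [ContinuousLinearMap.mul_apply]
        rw [hcommv a ξ.val]
      have key3 : (γ * R₀ * γ) (π a ξ.val) - π a ((γ * R₀ * γ) ξ.val)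
          = -(D ⟨π a ξ.val, h⟩ - π a (D ξ)) := by
        rw [← keyR, key2.symm, keyL]; abel
      have key4 : R₀ (π a ξ.val) - π a (R₀ ξ.val) = D ⟨π a ξ.val, h⟩ - π a (D ξ) :=
        (hR a ξ h).symm
      have final : ((2⁻¹:ℂ) • (R₀ - γ * R₀ * γ)) (π a ξ.val)
          - π a (((2⁻¹:ℂ) • (R₀ - γ * R₀ * γ)) ξ.val)
          = (2⁻¹:ℂ) • ((R₀ (π a ξ.val) - π a (R₀ ξ.val))
            - ((γ * R₀ * γ) (π a ξ.val) - π a ((γ * R₀ * γ) ξ.val))) := by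
        simp only [ContinuousLinearMap.smul_apply, ContinuousLinearMap.sub_apply, map_smul,
          map_sub, smul_sub]
        abel
      rw [final, key4, key3, sub_neg_eq_add, ← two_smul ℂ, smul_smul]
      norm_num
    · have h1 : γ * (γ * R₀ * γ) = R₀ * γ := by
        rw [← mul_assoc, ← mul_assoc, hγ2, one_mul]
      have h2 : γ * R₀ * γ * γ = γ * R₀ := by
        rw [mul_assoc, hγ2, mul_one]
      rw [mul_smul_comm, smul_mul_assoc, mul_sub, sub_mul, h1, h2, ← smul_neg, neg_sub]
end

section
/- Let A be a unital complex C*-algebra, D ∈ A selfadjoint, and γ ∈ A a selfadjoint unitary (γ = γ*, γ² = 1) satisfying γD = −Dγ. Then the Higson transform h(D) := (1 + D²)^{-1}·γ − D·(1 + D²)^{-1} + (1 − γ)/2 is a projection: h(D)* = h(D) and h(D)² = h(D). -/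
/-- The Higson transform `h(D) = (1 + D²)⁻¹ γ − D (1 + D²)⁻¹ + (1 − γ)/2`. -/
noncomputable def higson {A : Type*} [Ring A] [Algebra ℂ A] (D γ : A) : A :=
  Ring.inverse (1 + D ^ 2) * γ - D * Ring.inverse (1 + D ^ 2) + (2 : ℂ)⁻¹ • (1 - γ)


private lemma commute_ringInverse {M : Type*} [MonoidWithZero M] {x u : M} (hu : IsUnit u)
    (h : Commute x u) : Commute x (Ring.inverse u) := by
  obtain ⟨v, rfl⟩ := hu
  rw [Ring.inverse_unit]
  exact h.units_inv_right

private lemma key_identity {A : Type*} [Ring A] (a b q r : A)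
    (h1 : a * b + b * a = 0) (h2 : a * a + b * b = r)
    (h3 : a * q + q * a = a - r) (h4 : b * q + q * b = b) (h5 : q * q = q) :
    (a - b + q) * (a - b + q) = a - b + q := by
  have expand : (a - b + q) * (a - b + q) =
      (a * a + b * b) + (a * q + q * a) - (a * b + b * a) - (b * q + q * b) + q * q := by
    noncomm_ring
  rw [expand, h1, h2, h3, h4, h5]
  abel

/-- In a unital C*-algebra, for `D` selfadjoint and `γ` a selfadjoint unitary
anticommuting with `D`, the Higson transform `h(D)` is a projection. -/
theorem higson_is_projection {A : Type*} [CStarAlgebra A]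
    (D γ : A) (hD : IsSelfAdjoint D) (hγ : IsSelfAdjoint γ) (hγ2 : γ * γ = 1)
    (hanti : γ * D = -(D * γ)) :
    star (higson D γ) = higson D γ ∧ higson D γ * higson D γ = higson D γ := by
  set r := Ring.inverse (1 + D ^ 2) with hr
  have hu : IsUnit (1 + D ^ 2) := by
    have h1 : (-1 : ℝ) ∉ spectrum ℝ (D ^ 2) := by
      intro h
      have h2 := spectrum_star_mul_self_nonneg (A := A) (b := D) (-1)
        (by rwa [hD.star_eq, ← sq])
      linarith
    rw [spectrum.notMem_iff] at h1
    have h3 : algebraMap ℝ A (-1) - D ^ 2 = -(1 + D ^ 2) := by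
      simp [neg_add, sub_eq_add_neg]; abel
    rw [h3] at h1
    simpa using h1.neg
  have hru : r * (1 + D ^ 2) = 1 := Ring.inverse_mul_cancel _ hu
  have hstaru : star (1 + D ^ 2) = 1 + D ^ 2 := by simp [star_pow, hD.star_eq]
  have hstar_r : star r = r := by rw [hr, ← Ring.inverse_star, hstaru]
  have hγD2 : Commute γ (D ^ 2) := by
    show γ * D ^ 2 = D ^ 2 * γ
    simp only [sq]
    rw [← mul_assoc, hanti, neg_mul, mul_assoc, hanti, mul_neg, neg_neg, ← mul_assoc]
  have hDr : Commute D r := commute_ringInverse hu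
    ((Commute.one_right D).add_right ((Commute.refl D).pow_right 2))
  have hγr : Commute γ r := commute_ringInverse hu ((Commute.one_right γ).add_right hγD2)
  -- rewrite helpers
  have swγD : ∀ t : A, γ * (D * t) = -(D * (γ * t)) := fun t => by
    rw [← mul_assoc, hanti, neg_mul, mul_assoc]
  have swγr : ∀ t : A, γ * (r * t) = r * (γ * t) := fun t => by
    rw [← mul_assoc, hγr.eq, mul_assoc]
  have swDr : ∀ t : A, D * (r * t) = r * (D * t) := fun t => by
    rw [← mul_assoc, hDr.eq, mul_assoc]
  have swγγ : ∀ t : A, γ * (γ * t) = t := fun t => by rw [← mul_assoc, hγ2, one_mul]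
  set a := r * γ with ha
  set b := D * r with hb
  set q := (2 : ℂ)⁻¹ • (1 - γ) with hq
  have hh : higson D γ = a - b + q := rfl
  constructor
  · rw [hh]
    simp only [hq, star_add, star_sub, star_mul, star_smul, star_one, hγ.star_eq, hD.star_eq,
      hstar_r, star_inv₀, star_ofNat, ha, hb, hγr.eq, hDr.eq]
  · rw [hh]
    refine key_identity a b q r ?_ ?_ ?_ ?_ ?_
    · -- a*b + b*a = 0
      simp only [ha, hb, mul_assoc, swγD, swDr, swγr, swγγ, mul_neg, neg_mul, neg_neg,
        hanti, hγr.eq, hDr.eq, hγ2, mul_one, one_mul]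
      module
    · -- a*a + b*b = r
      have step : a * a + b * b = r * (r * (1 + D ^ 2)) := by
        simp only [ha, hb, mul_assoc, swγD, swDr, swγr, swγγ, mul_neg, neg_mul, neg_neg,
          hanti, hγr.eq, hDr.eq, hγ2, mul_one, one_mul, mul_add, sq]
      rw [step, hru, mul_one]
    · -- a*q + q*a = a - r
      simp only [hq, ha, mul_smul_comm, smul_mul_assoc, mul_sub, sub_mul, one_mul, mul_one,
        mul_assoc, swγr, swγγ, hγ2]
      module
    · -- b*q + q*b = b
      simp only [hq, hb, mul_smul_comm, smul_mul_assoc, mul_sub, sub_mul, one_mul, mul_one,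
        mul_assoc, swγD, swγr, mul_neg, neg_mul, neg_neg, hanti, hγr.eq, hDr.eq]
      module
    · -- q*q = q
      simp only [hq, mul_smul_comm, smul_mul_assoc, mul_sub, sub_mul, one_mul, mul_one, hγ2,
        smul_smul, smul_sub]
      module
end

section
/- Let A be a unital complex C*-algebra, D ∈ A selfadjoint, and γ ∈ A a selfadjoint unitary (γ = γ*, γ² = 1) satisfying γD = −Dγ. Let (1 + D²)^{-1/2} denote the inverse of the unique positive square root of the positive invertible element 1 + D². Then U := (1 + D²)^{-1/2} + D·(1 + D²)^{-1/2}·γ is a unitary: U*U = UU* = 1. -/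
/-- The inverse `a^{-1/2}` of the unique positive square root of a positive invertible
element `a` of a unital C*-algebra; the square root is given by the continuous functional
calculus of `Real.sqrt`. -/
noncomputable def invSqrt {A : Type*} [CStarAlgebra A] (a : A) : A :=
  Ring.inverse (cfc Real.sqrt a)

private lemma unitary_aux {A : Type*} [Ring A] (T E γ : A)
    (hTE : T * E = E * T) (hγT : γ * T = T * γ) (hγE : γ * E = -(E * γ))
    (hγ2 : γ * γ = 1) (h : T * T + E * E = 1) :
    (T - E * γ) * (T + E * γ) = 1 ∧ (T + E * γ) * (T - E * γ) = 1 := by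
  have h1 : E * γ * T = T * E * γ := by
    rw [mul_assoc, hγT, ← mul_assoc, ← hTE]
  have h2 : E * γ * (E * γ) = -(E * E) := by
    rw [mul_assoc, ← mul_assoc γ E γ, hγE]
    simp only [neg_mul, mul_neg, mul_assoc, hγ2, mul_one]
  constructor
  · have e1 : (T - E * γ) * (T + E * γ) = T * T + E * E := by
      rw [sub_mul, mul_add, mul_add, h1, h2]; noncomm_ring
    rw [e1, h]
  · have e2 : (T + E * γ) * (T - E * γ) = T * T + E * E := by
      rw [add_mul, mul_sub, mul_sub, h1, h2]; noncomm_ring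
    rw [e2, h]

/-- Conjugation by a selfadjoint unitary, as a star algebra homomorphism. -/
@[simps]
noncomputable def conjSAU {A : Type*} [CStarAlgebra A] (γ : A) (hγ : IsSelfAdjoint γ)
    (hγ2 : γ * γ = 1) : A →⋆ₐ[ℂ] A where
  toFun x := γ * x * γ
  map_one' := by show γ * 1 * γ = 1; rw [mul_one, hγ2]
  map_mul' x y := by
    show γ * (x * y) * γ = (γ * x * γ) * (γ * y * γ)
    calc γ * (x * y) * γ = γ * x * (γ * γ) * y * γ := by rw [hγ2]; noncomm_ring
    _ = γ * x * γ * (γ * y * γ) := by noncomm_ring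
  map_zero' := by simp
  map_add' x y := by show γ * (x + y) * γ = γ * x * γ + γ * y * γ; noncomm_ring
  commutes' r := by
    show γ * algebraMap ℂ A r * γ = algebraMap ℂ A r
    simp only [Algebra.algebraMap_eq_smul_one, mul_smul_comm, smul_mul_assoc, mul_one, hγ2]
  map_star' x := by
    show γ * star x * γ = star (γ * x * γ)
    simp only [star_mul, hγ.star_eq, mul_assoc]

/-- In a unital C*-algebra, for `D` selfadjoint and `γ` a selfadjoint unitary anticommuting
with `D`, the element `U = (1 + D²)^{-1/2} + D (1 + D²)^{-1/2} γ` is a unitary. -/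
theorem higson_conjugating_unitary {A : Type*} [CStarAlgebra A]
    (D γ : A) (hD : IsSelfAdjoint D) (hγ : IsSelfAdjoint γ) (hγ2 : γ * γ = 1)
    (hanti : γ * D = -(D * γ)) :
    star (invSqrt (1 + D ^ 2) + D * invSqrt (1 + D ^ 2) * γ)
        * (invSqrt (1 + D ^ 2) + D * invSqrt (1 + D ^ 2) * γ) = 1 ∧
    (invSqrt (1 + D ^ 2) + D * invSqrt (1 + D ^ 2) * γ)
        * star (invSqrt (1 + D ^ 2) + D * invSqrt (1 + D ^ 2) * γ) = 1 := by
  have hfpos : ∀ x : ℝ, 0 < 1 + x ^ 2 := fun x => by positivity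
  have hsqrtpos : ∀ x : ℝ, 0 < Real.sqrt (1 + x ^ 2) := fun x =>
    Real.sqrt_pos.mpr (hfpos x)
  set f : ℝ → ℝ := fun x => 1 + x ^ 2 with hf
  set g : ℝ → ℝ := fun x => (Real.sqrt (1 + x ^ 2))⁻¹ with hg
  have hgcont : Continuous g := by
    rw [hg]
    exact Continuous.inv₀ (by fun_prop) fun x => (hsqrtpos x).ne'
  have hfcont : Continuous f := by rw [hf]; fun_prop
  -- 1 + D² as a cfc of D
  have h1 : (1 : A) + D ^ 2 = cfc f D := by
    rw [hf, cfc_add (a := D) (f := fun _ : ℝ => (1 : ℝ)) (g := fun x : ℝ => x ^ 2),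
      cfc_const_one ℝ D, cfc_pow_id D 2]
  -- the square root as a cfc of D
  have h2 : cfc Real.sqrt (1 + D ^ 2) = cfc (fun x => Real.sqrt (1 + x ^ 2)) D := by
    rw [h1, ← cfc_comp' Real.sqrt f D (Real.continuous_sqrt.continuousOn)]
  -- invSqrt (1 + D²) as a cfc of D
  have hrep : invSqrt (1 + D ^ 2) = cfc g D := by
    rw [invSqrt, h2, hg]
    exact (cfc_inv (fun x => Real.sqrt (1 + x ^ 2)) D
      (fun x _ => (hsqrtpos x).ne')).symm
  set T : A := invSqrt (1 + D ^ 2) with hT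
  have hTsa : IsSelfAdjoint T := hrep ▸ cfc_predicate g D
  have hDT : D * T = T * D := by
    rw [hrep]
    have := cfc_commute_cfc (id : ℝ → ℝ) g D
    rwa [cfc_id ℝ D] at this
  -- γ commutes with T
  have hγT : γ * T = T * γ := by
    have hφD : conjSAU γ hγ hγ2 D = -D := by
      simp only [conjSAU_apply]
      rw [hanti]
      simp [mul_assoc, hγ2]
    have hcont : Continuous (conjSAU γ hγ hγ2) := by
      have : ⇑(conjSAU γ hγ hγ2) = fun x : A => γ * x * γ :=
        funext fun x => conjSAU_apply γ hγ hγ2 x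
      rw [this]; fun_prop
    have key : γ * cfc g D * γ = cfc g D := by
      have hmap := StarAlgHomClass.map_cfc (conjSAU γ hγ hγ2) g D hgcont.continuousOn hcont
      rw [conjSAU_apply] at hmap
      rw [hmap, hφD, ← cfc_comp_neg g D hgcont.continuousOn]
      exact cfc_congr fun x _ => by simp [hg]
    calc γ * T = γ * T * (γ * γ) := by rw [hγ2, mul_one]
    _ = (γ * (cfc g D) * γ) * γ := by rw [hrep]; noncomm_ring
    _ = T * γ := by rw [key, hrep]
  -- T² (1 + D²) = 1
  have hsq : cfc g D * cfc g D * (1 + D ^ 2) = 1 := by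
    rw [h1, ← cfc_mul g g D hgcont.continuousOn hgcont.continuousOn,
      ← cfc_mul _ f D (by fun_prop) hfcont.continuousOn]
    calc cfc (fun x : ℝ => g x * g x * f x) D = cfc (fun _ : ℝ => (1 : ℝ)) D := by
          refine cfc_congr fun x _ => ?_
          simp only [hg, hf]
          rw [← mul_inv, Real.mul_self_sqrt (hfpos x).le]
          exact inv_mul_cancel₀ (hfpos x).ne'
    _ = 1 := cfc_const_one ℝ D
  have hTTinv : T * T + (T * D) * (T * D) = 1 := by
    have e : (T * D) * (T * D) = T * T * D ^ 2 := by
      have : D * (T * D) = T * (D * D) := by rw [← mul_assoc, hDT, mul_assoc]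
      rw [mul_assoc T D (T * D), this]; noncomm_ring
    calc T * T + (T * D) * (T * D) = T * T * (1 + D ^ 2) := by rw [e]; noncomm_ring
    _ = 1 := by rw [hrep]; exact hsq
  have hTE : T * (T * D) = (T * D) * T := by
    rw [mul_assoc T D T, hDT]
  have hγE : γ * (T * D) = -((T * D) * γ) := by
    rw [← mul_assoc, hγT, mul_assoc, hanti]; noncomm_ring
  have main := unitary_aux T (T * D) γ hTE hγT hγE hγ2 hTTinv
  have hUstar : star (T + D * T * γ) = T - (T * D) * γ := by
    rw [star_add, star_mul, star_mul, hγ.star_eq, hTsa.star_eq, hD.star_eq,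
      ← mul_assoc, mul_assoc γ T D, hγE]
    noncomm_ring
  have hU : T + D * T * γ = T + (T * D) * γ := by rw [hDT]
  constructor
  · rw [hUstar, hU]; exact main.1
  · rw [hUstar, hU]; exact main.2
end

section
/- Let H be a complex Hilbert space, N ≥ 1, and S₁, …, S_N bounded operators on H satisfying the Cuntz relations Sᵢ*Sⱼ = δᵢⱼ·1 for all i, j, and Σ_{i=1}^{N} SᵢSᵢ* = 1. Then: (a) the map α : H^N → H defined on the N-fold Hilbert space direct sum by α(ξ₁, …, ξ_N) := Σ_{i=1}^{N} Sᵢξᵢ is a unitary, with α*(η) = (S₁*η, …, S_N*η). (b) If moreover D is a closed, densely defined linear operator on H such that each Sᵢ and each Sᵢ* maps Dom D into Dom D, and each commutator [D, Sᵢ] extends to a bounded operator bᵢ on H, then α restricts to a bijection from (Dom D)^N onto Dom D, and for all (ξ₁, …, ξ_N) ∈ (Dom D)^N one has D(α(ξ)) = α((Dξ₁, …, Dξ_N)) + Σ_{j=1}^{N} bⱼξⱼ; consequently α* ∘ D ∘ α equals the diagonal operator D ⊕ ⋯ ⊕ D plus the bounded operator on H^N with matrix entries Sᵢ*bⱼ.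 -/
/-- The `L²` direct sum of complete spaces is complete. -/
instance PiLp.instCompleteSpace {ι : Type*} (p : ENNReal) (α : ι → Type*)
    [∀ i, UniformSpace (α i)] [∀ i, CompleteSpace (α i)] : CompleteSpace (PiLp p α) :=
  inferInstance

local notation "⟪" x ", " y "⟫" => @inner ℂ _ _ x y

set_option maxHeartbeats 1000000 in
set_option synthInstance.maxHeartbeats 400000 in
/-- For isometries `S₁, …, S_N` satisfying the Cuntz relations, the map
`α(ξ₁, …, ξ_N) = ∑ᵢ Sᵢ ξᵢ` on the `N`-fold Hilbert direct sum is a unitary with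
`α*(η) = (S₁*η, …, S_N*η)`; and if `D` is a closed densely defined operator whose domain
is preserved by each `Sᵢ` and `Sᵢ*`, with `[D, Sᵢ]` extending to the bounded operator `bᵢ`,
then `α` restricts to a bijection of `(Dom D)^N` onto `Dom D`,
`D(αξ) = α(Dξ₁, …, Dξ_N) + ∑ⱼ bⱼ ξⱼ`, and `α* ∘ D ∘ α` is the diagonal operator
`D ⊕ ⋯ ⊕ D` plus the bounded operator with matrix entries `Sᵢ* bⱼ`. -/
theorem cuntz_isometries_amplification
    {H : Type*} [NormedAddCommGroup H] [InnerProductSpace ℂ H] [CompleteSpace H]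
    {N : ℕ} (hN : 1 ≤ N) (S : Fin N → H →L[ℂ] H)
    (horth : ∀ i j, star (S i) * S j = if i = j then (1 : H →L[ℂ] H) else 0)
    (hsum : ∑ i, S i * star (S i) = 1)
    (α : PiLp 2 (fun _ : Fin N => H) →L[ℂ] H)
    (hα : ∀ ξ : PiLp 2 (fun _ : Fin N => H), α ξ = ∑ i, S i (ξ i)) :
    (Function.Bijective ⇑α ∧ (∀ ξ, ‖α ξ‖ = ‖ξ‖) ∧
      ∀ (η : H) (i : Fin N), (ContinuousLinearMap.adjoint α) η i = star (S i) η) ∧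
    ∀ (D : H →ₗ.[ℂ] H), D.IsClosed → Dense (D.domain : Set H) →
      (∀ i, ∀ ξ ∈ D.domain, S i ξ ∈ D.domain) →
      (∀ i, ∀ ξ ∈ D.domain, star (S i) ξ ∈ D.domain) →
      ∀ (b : Fin N → H →L[ℂ] H), (∀ i, IsCommutatorBound D (S i) (b i)) →
        (∀ ξ : PiLp 2 (fun _ : Fin N => H), (∀ i, ξ i ∈ D.domain) ↔ α ξ ∈ D.domain) ∧
        (∀ (ξ : PiLp 2 (fun _ : Fin N => H)) (hξ : ∀ i, ξ i ∈ D.domain)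
            (hmem : α ξ ∈ D.domain),
          D ⟨α ξ, hmem⟩ = α (WithLp.toLp 2 (fun i => D ⟨ξ i, hξ i⟩)) + ∑ j, b j (ξ j)) ∧
        (∀ (ξ : PiLp 2 (fun _ : Fin N => H)) (hξ : ∀ i, ξ i ∈ D.domain)
            (hmem : α ξ ∈ D.domain) (i : Fin N),
          (ContinuousLinearMap.adjoint α) (D ⟨α ξ, hmem⟩) i
            = D ⟨ξ i, hξ i⟩ + ∑ j, star (S i) (b j (ξ j))) := by
  classical
  -- pointwise Cuntz relation
  have hdelta : ∀ i j (x : H), star (S i) (S j x) = if i = j then x else 0 := by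
    intro i j x
    have h := congrArg (fun T : H →L[ℂ] H => T x) (horth i j)
    simp only [ContinuousLinearMap.mul_apply] at h
    rw [h]
    by_cases hij : i = j <;> simp [hij]
  -- star Sᵢ extracts the i-th summand
  have hextract : ∀ (i : Fin N) (ξ : Fin N → H),
      star (S i) (∑ j, S j (ξ j)) = ξ i := by
    intro i ξ
    rw [map_sum]
    rw [Finset.sum_congr rfl (fun j _ => hdelta i j (ξ j))]
    simp
  have hinner : ∀ ξ η : PiLp 2 (fun _ : Fin N => H), ⟪α ξ, α η⟫ = ⟪ξ, η⟫ := by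
    intro ξ η
    rw [hα, hα, sum_inner, PiLp.inner_apply]
    refine Finset.sum_congr rfl fun i _ => ?_
    rw [inner_sum]
    have : ∀ j ∈ Finset.univ, ⟪S i (ξ i), S j (η j)⟫
        = if j = i then ⟪ξ i, η i⟫ else 0 := by
      intro j _
      rw [← ContinuousLinearMap.adjoint_inner_right, ← ContinuousLinearMap.star_eq_adjoint,
        hdelta i j]
      by_cases hij : i = j
      · subst hij; simp
      · simp [hij, Ne.symm hij]
    rw [Finset.sum_congr rfl this, Finset.sum_ite_eq' Finset.univ i]
    simp
  have hnorm : ∀ ξ, ‖α ξ‖ = ‖ξ‖ := by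
    intro ξ
    have := hinner ξ ξ
    rw [inner_self_eq_norm_sq_to_K, inner_self_eq_norm_sq_to_K] at this
    have h2 : (‖α ξ‖ : ℝ) ^ 2 = ‖ξ‖ ^ 2 := by exact_mod_cast this
    have := congrArg Real.sqrt h2
    simpa [Real.sqrt_sq, norm_nonneg] using this
  have hsurj : Function.Surjective ⇑α := by
    intro η
    refine ⟨(WithLp.toLp 2 (fun i => star (S i) η) : PiLp 2 (fun _ : Fin N => H)), ?_⟩
    rw [hα]
    have h := congrArg (fun T : H →L[ℂ] H => T η) hsum
    simpa [ContinuousLinearMap.sum_apply, ContinuousLinearMap.mul_apply] using h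
  have hadj : ∀ (η : H) (i : Fin N),
      (ContinuousLinearMap.adjoint α) η i = star (S i) η := by
    intro η i
    have : (ContinuousLinearMap.adjoint α) η
        = (WithLp.toLp 2 (fun i => star (S i) η) : PiLp 2 (fun _ : Fin N => H)) := by
      refine ext_inner_right ℂ fun ξ => ?_
      rw [ContinuousLinearMap.adjoint_inner_left, hα, inner_sum, PiLp.inner_apply]
      refine Finset.sum_congr rfl fun j _ => ?_
      show _ = inner ℂ (star (S j) η) _
      rw [ContinuousLinearMap.star_eq_adjoint, ContinuousLinearMap.adjoint_inner_left]
    rw [this]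
  refine ⟨⟨⟨(AddMonoidHomClass.isometry_of_norm α hnorm).injective, hsurj⟩, hnorm, hadj⟩, ?_⟩
  intro D _ _ hS hS' b hb
  have hiff : ∀ ξ : PiLp 2 (fun _ : Fin N => H),
      (∀ i, ξ i ∈ D.domain) ↔ α ξ ∈ D.domain := by
    intro ξ
    constructor
    · intro h
      rw [hα]
      exact Submodule.sum_mem _ fun i _ => hS i _ (h i)
    · intro h i
      have : ξ i = star (S i) (α ξ) := by rw [hα, hextract]
      rw [this]
      exact hS' i _ h
  have hkey : ∀ (ξ : PiLp 2 (fun _ : Fin N => H)) (hξ : ∀ i, ξ i ∈ D.domain)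
      (hmem : α ξ ∈ D.domain),
      D ⟨α ξ, hmem⟩ = α (WithLp.toLp 2 (fun i => D ⟨ξ i, hξ i⟩)) + ∑ j, b j (ξ j) := by
    intro ξ hξ hmem
    have hdom : (⟨α ξ, hmem⟩ : D.domain)
        = ∑ i, (⟨S i (ξ i), hS i _ (hξ i)⟩ : D.domain) := by
      apply Subtype.ext
      push_cast [hα]
      rfl
    rw [hdom]
    rw [show (D (∑ i, (⟨S i (ξ i), hS i _ (hξ i)⟩ : D.domain)))
        = ∑ i, D (⟨S i (ξ i), hS i _ (hξ i)⟩ : D.domain)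
      from map_sum D.toFun _ _]
    have hterm : ∀ i, D (⟨S i (ξ i), hS i _ (hξ i)⟩ : D.domain)
        = S i (D ⟨ξ i, hξ i⟩) + b i (ξ i) := by
      intro i
      have := hb i ⟨ξ i, hξ i⟩ (hS i _ (hξ i))
      rw [this]
      abel
    rw [Finset.sum_congr rfl fun i _ => hterm i, Finset.sum_add_distrib, hα]
  refine ⟨hiff, hkey, ?_⟩
  intro ξ hξ hmem i
  rw [hadj, hkey ξ hξ hmem, map_add, map_sum]
  congr 1
  rw [hα]
  exact hextract i _
end
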